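/- arXiv:1904.02875 — 2 statements merged into one kernel-verified Lean document; each statement's English description precedes it below -/
import Mathlib

section
/- For the Pareto distribution with parameters α > 1 and β > 0, the value recurrence v_{n+1} = v_n + β^α v_n^{1-α}/(α-1) (with v_0 ≥ β) satisfies v_n / n^{1/α} → β·(α/(α-1))^{1/α} as n → ∞. -/
open Filter Real Finset Topology

/-! The substitution `w n = v n ^ α` turns the recurrence into
`w (n + 1) = w n (1 + c / w n) ^ α`, so Bernoulli's inequality gives `w (n + 1) ≥ w n + α c`,
hence `w n → ∞`, and then `w (n + 1) - w n = c · ((1 + t) ^ α - 1) / t` with `t = c / w n → 0`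
tends to `α c`, the derivative of `t ↦ (1 + t) ^ α` at `0` scaled by `c`.
By Cesàro, `w n / n → α c`, and taking `α`-th roots gives `v n / n ^ (1 / α) → (α c) ^ (1 / α)`. -/

theorem tendsto_one_add_rpow_sub_one_div (α : ℝ) :
    Tendsto (fun t : ℝ => ((1 + t) ^ α - 1) / t) (𝓝[≠] 0) (𝓝 α) := by
  have hderiv : HasDerivAt (fun t : ℝ => (1 + t) ^ α) α 0 := by
    simpa using ((hasDerivAt_id (0 : ℝ)).const_add 1).rpow_const (p := α) (by simp)
  refine (hasDerivAt_iff_tendsto_slope.mp hderiv).congr' ?_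
  filter_upwards [self_mem_nhdsWithin] with t _
  simp [slope_def_field]

theorem Filter.Tendsto.div_natCast_of_tendsto_sub {u : ℕ → ℝ} {l : ℝ}
    (h : Tendsto (fun n => u (n + 1) - u n) atTop (𝓝 l)) :
    Tendsto (fun n : ℕ => u n / n) atTop (𝓝 l) := by
  have hsum := h.cesaro.add (tendsto_const_div_atTop_nhds_zero_nat (u 0))
  rw [add_zero] at hsum
  refine hsum.congr fun n => ?_
  rw [Finset.sum_range_sub u n]
  ring

theorem add_mul_rpow_one_sub_eq_mul {v : ℝ} (hv : 0 < v) (c α : ℝ) :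
    v + c * v ^ (1 - α) = v * (1 + c / v ^ α) := by
  rw [rpow_sub hv, rpow_one]
  field_simp

namespace PowerRecurrence

variable {α c : ℝ} {v : ℕ → ℝ}

theorem pos (hc : 0 < c) (hv0 : 0 < v 0) (hrec : ∀ n, v (n + 1) = v n + c * v n ^ (1 - α))
    (n : ℕ) : 0 < v n := by
  induction n with
  | zero => exact hv0
  | succ n ih => rw [hrec n]; have := rpow_pos_of_pos ih (1 - α); positivity

variable (hα : 1 ≤ α) (hc : 0 < c) (hv0 : 0 < v 0)
  (hrec : ∀ n, v (n + 1) = v n + c * v n ^ (1 - α))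
include hc hv0 hrec

theorem rpow_succ (n : ℕ) : v (n + 1) ^ α = v n ^ α * (1 + c / v n ^ α) ^ α := by
  have hv := pos hc hv0 hrec n
  have : 0 < c / v n ^ α := div_pos hc (rpow_pos_of_pos hv α)
  rw [hrec n, add_mul_rpow_one_sub_eq_mul hv, mul_rpow hv.le (by positivity)]

include hα in
theorem rpow_add_le_rpow_succ (n : ℕ) : v n ^ α + α * c ≤ v (n + 1) ^ α := by
  have hw := rpow_pos_of_pos (pos hc hv0 hrec n) α
  have ht : 0 < c / v n ^ α := div_pos hc hw
  calc v n ^ α + α * c = v n ^ α * (1 + α * (c / v n ^ α)) := by field_simp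
    _ ≤ v n ^ α * (1 + c / v n ^ α) ^ α := by
      gcongr; exact one_add_mul_self_le_rpow_one_add (by linarith) hα
    _ = v (n + 1) ^ α := (rpow_succ hc hv0 hrec n).symm

include hα in
theorem tendsto_rpow_atTop : Tendsto (fun n => v n ^ α) atTop atTop := by
  have hlin (n : ℕ) : v 0 ^ α + n * (α * c) ≤ v n ^ α := by
    induction n with
    | zero => simp
    | succ n ih => push_cast; linarith [rpow_add_le_rpow_succ hα hc hv0 hrec n]
  refine tendsto_atTop_mono hlin (tendsto_atTop_add_const_left _ _ ?_)
  exact tendsto_natCast_atTop_atTop.atTop_mul_const (by positivity)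

include hα in
theorem tendsto_rpow_succ_sub_rpow :
    Tendsto (fun n => v (n + 1) ^ α - v n ^ α) atTop (𝓝 (α * c)) := by
  have ht : Tendsto (fun n => c / v n ^ α) atTop (𝓝[≠] 0) :=
    tendsto_nhdsWithin_of_tendsto_nhds_of_eventually_within _
      ((tendsto_rpow_atTop hα hc hv0 hrec).const_div_atTop c)
      (Eventually.of_forall fun n => (div_pos hc (rpow_pos_of_pos (pos hc hv0 hrec n) α)).ne')
  have hlim := ((tendsto_one_add_rpow_sub_one_div α).comp ht).const_mul c
  rw [mul_comm α c]
  refine hlim.congr fun n => ?_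
  have hw := (rpow_pos_of_pos (pos hc hv0 hrec n) α).ne'
  rw [rpow_succ hc hv0 hrec n, Function.comp_apply]
  field_simp

include hα in
theorem tendsto_div_rpow_inv :
    Tendsto (fun n : ℕ => v n / (n : ℝ) ^ (1 / α)) atTop (𝓝 ((α * c) ^ (1 / α))) := by
  have hα0 : α ≠ 0 := by positivity
  have hroot := (Tendsto.div_natCast_of_tendsto_sub (u := fun n => v n ^ α)
    (tendsto_rpow_succ_sub_rpow hα hc hv0 hrec)).rpow_const (p := 1 / α) (Or.inr (by positivity))
  refine hroot.congr' ?_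
  filter_upwards [eventually_ge_atTop 1] with n hn
  have hv := pos hc hv0 hrec n
  rw [div_rpow (rpow_nonneg hv.le α) (Nat.cast_nonneg n), ← rpow_mul hv.le,
    mul_one_div_cancel hα0, rpow_one]

end PowerRecurrence

/-- For the Pareto distribution with `α > 1`, `β > 0`, the value recurrence
`v_{n+1} = v_n + β^α v_n^{1-α}/(α-1)` with `v_0 ≥ β` satisfies
`v_n / n^{1/α} → β (α/(α-1))^{1/α}`. -/
theorem stmt_4 (α β : ℝ) (hα : 1 < α) (hβ : 0 < β) (v : ℕ → ℝ) (hv0 : β ≤ v 0)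
    (hrec : ∀ n, v (n + 1) = v n + β ^ α * (v n) ^ (1 - α) / (α - 1)) :
    Tendsto (fun n : ℕ => v n / (n : ℝ) ^ (1 / α)) atTop
      (nhds (β * (α / (α - 1)) ^ (1 / α))) := by
  have hα1 : 0 < α - 1 := sub_pos.mpr hα
  have hrec' (n : ℕ) : v (n + 1) = v n + β ^ α / (α - 1) * v n ^ (1 - α) := by
    rw [hrec n]; ring
  have hlim := PowerRecurrence.tendsto_div_rpow_inv hα.le
    (div_pos (rpow_pos_of_pos hβ α) hα1) (hβ.trans_le hv0) hrec'
  have hval : (α * (β ^ α / (α - 1))) ^ (1 / α) = β * (α / (α - 1)) ^ (1 / α) := by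
    rw [show α * (β ^ α / (α - 1)) = β ^ α * (α / (α - 1)) by ring,
      mul_rpow (rpow_nonneg hβ.le α) (by positivity), ← rpow_mul hβ.le,
      mul_one_div_cancel (by positivity), rpow_one]
  rwa [hval] at hlim
end

section
/- For the Pareto distribution with α > 1, the tail probabilities along the value sequence satisfy n·h(v_n) → (α-1)/α as n → ∞, where v_{n+1} = v_n + β^α v_n^{1-α}/(α-1) with v_0 ≥ β and h(y) = (β/y)^α. -/
/-!
Put `c = β^α/(α-1)` and `a_n = v_n^α`. The recurrence reads `v_{n+1} = v_n (1 + c/a_n)`, so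
`a_{n+1} - a_n = a_n ((1 + c/a_n)^α - 1)`. The sequence `v` increases and cannot have a finite
limit, so `a_n → ∞` and the increments tend to `αc`, the derivative of `(1 + x)^α` at `0` times `c`.
By Cesàro `a_n/n → αc`, hence `n (β/v_n)^α = β^α/(a_n/n) → β^α/(αc) = (α-1)/α`.
-/

open Filter Real Topology

theorem tendsto_div_natCast_of_tendsto_sub {a : ℕ → ℝ} {L : ℝ}
    (h : Tendsto (fun n => a (n + 1) - a n) atTop (𝓝 L)) :
    Tendsto (fun n : ℕ => a n / n) atTop (𝓝 L) := by
  have hsum : Tendsto (fun n : ℕ => (n : ℝ)⁻¹ * (a n - a 0)) atTop (𝓝 L) :=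
    h.cesaro.congr fun n => by rw [Finset.sum_range_sub a n]
  have hzero : Tendsto (fun n : ℕ => (n : ℝ)⁻¹ * a 0) atTop (𝓝 0) := by
    simpa using tendsto_inv_atTop_nhds_zero_nat.mul_const (a 0)
  simpa [div_eq_inv_mul, mul_sub] using hsum.add hzero

theorem tendsto_mul_one_add_div_rpow_sub_one (c α : ℝ) :
    Tendsto (fun x : ℝ => x * ((1 + c / x) ^ α - 1)) atTop (𝓝 (α * c)) := by
  rcases eq_or_ne c 0 with rfl | hc
  · simp
  have hslope : Tendsto (slope (fun y : ℝ => (1 + y) ^ α) 0) (𝓝[≠] 0) (𝓝 α) := by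
    refine hasDerivAt_iff_tendsto_slope.mp ?_
    simpa using ((hasDerivAt_id (0 : ℝ)).const_add 1).rpow_const (p := α) (Or.inl (by simp))
  have hcx : Tendsto (fun x : ℝ => c / x) atTop (𝓝[≠] 0) :=
    tendsto_nhdsWithin_of_tendsto_nhds_of_eventually_within _
      (tendsto_const_nhds.div_atTop tendsto_id)
      ((eventually_ne_atTop 0).mono fun x hx => div_ne_zero hc hx)
  rw [mul_comm α c]
  refine ((hslope.comp hcx).const_mul c).congr' ?_
  filter_upwards [eventually_ne_atTop 0] with x hx
  simp only [Function.comp_apply, slope_def_field, add_zero, one_rpow, sub_zero]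
  field_simp

namespace RpowRecurrence

variable {c α : ℝ} {v : ℕ → ℝ}

theorem pos (hc : 0 < c) (hv0 : 0 < v 0)
    (hrec : ∀ n, v (n + 1) = v n + c * v n ^ (1 - α)) (n : ℕ) : 0 < v n := by
  induction n with
  | zero => exact hv0
  | succ n ih => rw [hrec]; positivity

theorem tendsto_atTop (hc : 0 < c) (hv0 : 0 < v 0)
    (hrec : ∀ n, v (n + 1) = v n + c * v n ^ (1 - α)) : Tendsto v atTop atTop := by
  have hpos := pos hc hv0 hrec
  have hmono : Monotone v := monotone_nat_of_le_succ fun n => by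
    rw [hrec]; linarith [mul_pos hc (rpow_pos_of_pos (hpos n) (1 - α))]
  refine tendsto_atTop_atTop_of_monotone' hmono fun hbdd => ?_
  -- a finite limit `L > 0` would be a fixed point: `L = L + c L^(1-α)`
  obtain ⟨L, hL⟩ : ∃ L, Tendsto v atTop (𝓝 L) := ⟨_, tendsto_atTop_ciSup hmono hbdd⟩
  have hL0 : 0 < L :=
    hv0.trans_le (ge_of_tendsto hL (Eventually.of_forall fun n => hmono (Nat.zero_le n)))
  have hstep : Tendsto (fun n => v n + c * v n ^ (1 - α)) atTop (𝓝 (L + c * L ^ (1 - α))) :=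
    hL.add ((hL.rpow_const (Or.inl hL0.ne')).const_mul c)
  have hfix := tendsto_nhds_unique ((tendsto_add_atTop_iff_nat 1).mpr hL)
    (hstep.congr fun n => (hrec n).symm)
  linarith [mul_pos hc (rpow_pos_of_pos hL0 (1 - α))]

theorem rpow_succ (hc : 0 < c) (hv0 : 0 < v 0)
    (hrec : ∀ n, v (n + 1) = v n + c * v n ^ (1 - α)) (n : ℕ) :
    v (n + 1) ^ α = v n ^ α * (1 + c / v n ^ α) ^ α := by
  have hpos := pos hc hv0 hrec n
  have hsplit : v (n + 1) = v n * (1 + c / v n ^ α) := by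
    rw [hrec, rpow_sub hpos, rpow_one]; ring
  rw [hsplit, mul_rpow hpos.le (by positivity)]

theorem tendsto_rpow_div_natCast (hc : 0 < c) (hα : 0 < α) (hv0 : 0 < v 0)
    (hrec : ∀ n, v (n + 1) = v n + c * v n ^ (1 - α)) :
    Tendsto (fun n : ℕ => v n ^ α / n) atTop (𝓝 (α * c)) := by
  refine tendsto_div_natCast_of_tendsto_sub ?_
  have hpow : Tendsto (fun n => v n ^ α) atTop atTop :=
    (tendsto_rpow_atTop hα).comp (tendsto_atTop hc hv0 hrec)
  refine ((tendsto_mul_one_add_div_rpow_sub_one c α).comp hpow).congr fun n => ?_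
  simp only [Function.comp_apply, rpow_succ hc hv0 hrec n]
  ring

end RpowRecurrence

/-- For the Pareto distribution with `α > 1`, `β > 0`, along the value recurrence
`v_{n+1} = v_n + β^α v_n^{1-α}/(α-1)` with `v_0 ≥ β`, the tail probabilities satisfy
`n (β/v_n)^α → (α-1)/α`. -/
theorem stmt_14 (α β : ℝ) (hα : 1 < α) (hβ : 0 < β) (v : ℕ → ℝ) (hv0 : β ≤ v 0)
    (hrec : ∀ n, v (n + 1) = v n + β ^ α * (v n) ^ (1 - α) / (α - 1)) :
    Tendsto (fun n : ℕ => (n : ℝ) * (β / v n) ^ α) atTop (nhds ((α - 1) / α)) := by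
  set c := β ^ α / (α - 1)
  have hc : 0 < c := div_pos (by positivity) (by linarith)
  have hrec' : ∀ n, v (n + 1) = v n + c * v n ^ (1 - α) := fun n => by rw [hrec]; ring
  have hv0' : 0 < v 0 := hβ.trans_le hv0
  have hlim : Tendsto (fun n : ℕ => β ^ α / (v n ^ α / n)) atTop (𝓝 (β ^ α / (α * c))) :=
    tendsto_const_nhds.div (RpowRecurrence.tendsto_rpow_div_natCast hc (by linarith) hv0' hrec')
      (by positivity)
  have hval : β ^ α / (α * c) = (α - 1) / α := by
    have : α - 1 ≠ 0 := by linarith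
    simp only [c]
    field_simp
  rw [← hval]
  -- the rewriting holds for every `n`, including `n = 0` where `x / 0 = 0`
  refine hlim.congr fun n => ?_
  rw [div_rpow hβ.le (RpowRecurrence.pos hc hv0' hrec' n).le, div_div_eq_mul_div, mul_div_assoc']
  ring
end
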